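/- The complete symmetric digraph K_10* admits a resolvable decomposition into directed 5-cycles. -/

import Mathlib

/-!
The cyclic group `C₃ = Multiplicative (ZMod 3)` acts on `{∞} ∪ ZMod 3 × ZMod 3` (modelled as
`Option (ZMod 3 × ZMod 3)`) by translating both coordinates and fixing `∞`. Every arc has a finite
end, so `C₃` acts freely on the `90` arcs, with `30` orbits. Three resolution classes whose `30`
arcs meet every orbit exactly once therefore have `9` translates forming a resolvable
decomposition. A cyclic development of a single class over `ZMod 9` cannot work: the differences
along the cycle avoiding `∞` sum to `0`, as do all nonzero residues, so the path through `∞` would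
have to start and end at the same residue.
-/

/-- `K_n^*` admits a resolvable decomposition into directed `m`-cycles. -/
def HasRCD (n m : ℕ) : Prop :=
  ∃ (ι κ : Type) (cyc : ι → ZMod m → Fin n) (cls : ι → κ),
    (∀ i, Function.Injective (cyc i)) ∧
    (∀ u v : Fin n, u ≠ v →
      ∃! x : ι × ZMod m, (cyc x.1 x.2, cyc x.1 (x.2 + 1)) = (u, v)) ∧
    (∀ (c : κ) (v : Fin n), ∃! i : ι, cls i = c ∧ v ∈ Set.range (cyc i))

open Function Set

structure IsResolvableCycleDecomposition {V ι κ : Type*} {m : ℕ}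
    (cyc : ι → ZMod m → V) (cls : ι → κ) : Prop where
  injective : ∀ i, Injective (cyc i)
  existsUnique_arc : ∀ u v, u ≠ v → ∃! x : ι × ZMod m, (cyc x.1 x.2, cyc x.1 (x.2 + 1)) = (u, v)
  existsUnique_mem_range : ∀ c v, ∃! i, cls i = c ∧ v ∈ range (cyc i)

namespace IsResolvableCycleDecomposition

variable {V W ι κ G : Type*} {m : ℕ} {cyc : ι → ZMod m → V} {cls : ι → κ}

theorem map_equiv (h : IsResolvableCycleDecomposition cyc cls) (e : V ≃ W) :
    IsResolvableCycleDecomposition (fun i j => e (cyc i j)) cls where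
  injective i := e.injective.comp (h.injective i)
  existsUnique_arc u v huv := by
    simpa only [Prod.mk.injEq, ← e.eq_symm_apply] using
      h.existsUnique_arc (e.symm u) (e.symm v) (e.symm.injective.ne huv)
  existsUnique_mem_range c v := by
    simpa only [mem_range, ← e.eq_symm_apply] using h.existsUnique_mem_range c (e.symm v)

theorem develop [Group G] [MulAction G V] {s : ι → ZMod m → V}
    (hinj : ∀ j, Injective (s j))
    (hres : ∀ c v, ∃! j, cls j = c ∧ v ∈ range (s j))
    (hfree : ∀ u v : V, u ≠ v → ∀ g : G, g • (u, v) = (u, v) → g = 1)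
    (horbit : ∀ u v : V, u ≠ v →
      ∃! x : ι × ZMod m, (u, v) ∈ MulAction.orbit G (s x.1 x.2, s x.1 (x.2 + 1))) :
    IsResolvableCycleDecomposition (fun (x : G × ι) i => x.1 • s x.2 i)
      (fun x => (x.1, cls x.2)) where
  injective x := (MulAction.injective x.1).comp (hinj x.2)
  existsUnique_arc u v huv := by
    obtain ⟨⟨j, i⟩, ⟨g, hg⟩, hx⟩ := horbit u v huv
    refine ⟨((g, j), i), hg, ?_⟩
    rintro ⟨⟨g', j'⟩, i'⟩ hy
    dsimp only at hy hg
    rw [← Prod.smul_mk] at hy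
    obtain ⟨rfl, rfl⟩ := Prod.mk.inj (hx (j', i') ⟨g', hy⟩)
    have : g' * g⁻¹ = 1 := by
      refine hfree u v huv _ ?_
      rw [mul_smul, ← hg, inv_smul_smul, hy, hg]
    rw [mul_inv_eq_one.mp this]
  existsUnique_mem_range := by
    rintro ⟨g, c⟩ v
    have mem_iff : ∀ j, v ∈ range (fun i => g • s j i) ↔ g⁻¹ • v ∈ range (s j) := by
      simp only [mem_range, smul_eq_iff_eq_inv_smul, implies_true]
    obtain ⟨j, ⟨hj, hv⟩, huniq⟩ := hres c (g⁻¹ • v)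
    refine ⟨(g, j), ⟨by rw [hj], (mem_iff j).2 hv⟩, ?_⟩
    rintro ⟨g', j'⟩ ⟨hc, hv'⟩
    obtain ⟨rfl, hc⟩ := Prod.ext_iff.mp hc
    rw [huniq j' ⟨hc, (mem_iff j').1 hv'⟩]

end IsResolvableCycleDecomposition

theorem IsResolvableCycleDecomposition.hasRCD {V ι κ : Type} [Fintype V] {n m : ℕ}
    {cyc : ι → ZMod m → V} {cls : ι → κ}
    (h : IsResolvableCycleDecomposition cyc cls) (hV : Fintype.card V = n) : HasRCD n m :=
  have h' := h.map_equiv (Fintype.equivFinOfCardEq hV)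
  ⟨ι, κ, _, cls, h'.injective, h'.existsUnique_arc, h'.existsUnique_mem_range⟩

abbrev Vertex := Option (ZMod 3 × ZMod 3)

-- Found by a computer search.
def baseCycle : Fin 3 × Fin 2 → ZMod 5 → Vertex := fun x =>
  ![![![none, some (0, 0), some (0, 1), some (0, 2), some (1, 0)],
      ![some (1, 1), some (2, 0), some (1, 2), some (2, 1), some (2, 2)]],
    ![![none, some (1, 0), some (0, 1), some (0, 0), some (2, 0)],
      ![some (0, 2), some (1, 2), some (2, 2), some (2, 1), some (1, 1)]],
    ![![none, some (0, 1), some (1, 2), some (0, 0), some (1, 1)],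
      ![some (0, 2), some (2, 1), some (2, 0), some (1, 0), some (2, 2)]]] x.1 x.2

theorem baseCycle_injective : ∀ x, Injective (baseCycle x) := by
  decide

theorem existsUnique_baseCycle_mem_range :
    ∀ c v, ∃! x : Fin 3 × Fin 2, x.1 = c ∧ v ∈ range (baseCycle x) := by
  simp only [ExistsUnique, mem_range]
  decide

theorem eq_one_of_smul_arc_eq_self :
    ∀ u v : Vertex, u ≠ v → ∀ g : Multiplicative (ZMod 3), g • (u, v) = (u, v) → g = 1 := by
  decide

theorem existsUnique_mem_orbit_baseCycle :
    ∀ u v : Vertex, u ≠ v → ∃! x : (Fin 3 × Fin 2) × ZMod 5,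
      (u, v) ∈ MulAction.orbit (Multiplicative (ZMod 3))
        (baseCycle x.1 x.2, baseCycle x.1 (x.2 + 1)) := by
  simp only [ExistsUnique, MulAction.mem_orbit_iff]
  decide

theorem hasRCD_ten_five : HasRCD 10 5 :=
  (IsResolvableCycleDecomposition.develop baseCycle_injective existsUnique_baseCycle_mem_range
    eq_one_of_smul_arc_eq_self existsUnique_mem_orbit_baseCycle).hasRCD rfl
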